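/- Let C = ⟨g_1(x)⟩ be the cyclic code of length n = p^k over R = F[u]/⟨u⁴⟩ generated by g_1(x) = u(x−1)^{r_1} + u²(x−1)^{k_4}p_4(x) + u³(x−1)^{k_5}p_5(x), where 0 ≤ k_4, k_5 < r_1 < n and p_4(x), p_5(x) are units or zero in F[x]/⟨xⁿ − 1⟩. Then u²g_1(x) = u³(x−1)^{r_1} ∈ C and u(x−1)^{n−r_1}g_1(x) = u³(x−1)^{n−r_1+k_4}p_4(x) ∈ C. Consequently, if p_4(x) is a unit, then the third torsional degree of C satisfies t_3 ≤ min{r_1, n − r_1 + k_4}. -/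

import Mathlib

open Polynomial
open scoped Classical

noncomputable section

/-- The ring `R = F[u]/⟨u⁴⟩`. -/
abbrev Rq (F : Type) [Field F] : Type :=
  Polynomial F ⧸ Ideal.span ({X ^ 4} : Set (Polynomial F))

instance instCommRingRq (F : Type) [Field F] : CommRing (Rq F) :=
  Ideal.Quotient.commRing _

/-- The ring `S = R[x]/⟨xⁿ − 1⟩`. -/
abbrev Sq (F : Type) [Field F] (n : ℕ) : Type :=
  Polynomial (Rq F) ⧸ Ideal.span ({X ^ n - 1} : Set (Polynomial (Rq F)))

instance instCommRingSq (F : Type) [Field F] (n : ℕ) : CommRing (Sq F n) :=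
  Ideal.Quotient.commRing _

/-- The ring `Q = F[x]/⟨xⁿ − 1⟩`. -/
abbrev Qq (F : Type) [Field F] (n : ℕ) : Type :=
  Polynomial F ⧸ Ideal.span ({X ^ n - 1} : Set (Polynomial F))

/-- The element `u` of `R`. -/
def uu (F : Type) [Field F] : Rq F := Ideal.Quotient.mk _ X

/-- The element `u` of `S`. -/
def uS (F : Type) [Field F] (n : ℕ) : Sq F n := Ideal.Quotient.mk _ (C (uu F))

/-- The element `x` of `S`. -/
def xS (F : Type) [Field F] (n : ℕ) : Sq F n := Ideal.Quotient.mk _ X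

/-- The element `x` of `Q`. -/
def xQ (F : Type) [Field F] (n : ℕ) : Qq F n := Ideal.Quotient.mk _ X

/-- Reduction `R → F` modulo `u`. -/
def resHom (F : Type) [Field F] : Rq F →+* F :=
  Ideal.Quotient.lift _ (evalRingHom 0) (by
    intro a ha
    rw [Ideal.mem_span_singleton] at ha
    obtain ⟨c, rfl⟩ := ha
    simp)

/-- Reduction `μ : S → Q` modulo `u`. -/
def muHom (F : Type) [Field F] (n : ℕ) : Sq F n →+* Qq F n :=
  Ideal.Quotient.lift _ ((Ideal.Quotient.mk _).comp (mapRingHom (resHom F))) (by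
    intro a ha
    rw [Ideal.mem_span_singleton] at ha
    obtain ⟨c, rfl⟩ := ha
    rw [RingHom.comp_apply, map_mul, Ideal.Quotient.eq_zero_iff_mem]
    apply Ideal.mul_mem_right
    have h : (mapRingHom (resHom F)) (X ^ n - 1 : Polynomial (Rq F))
        = (X ^ n - 1 : Polynomial F) := by simp
    rw [h]
    exact Ideal.subset_span rfl)

/-- The natural lift `Q → S` (sending `a ∈ F` to itself and `x ↦ x`). -/
def liftQS (F : Type) [Field F] (n : ℕ) : Qq F n →+* Sq F n :=
  Ideal.Quotient.lift _
    ((Ideal.Quotient.mk _).comp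
      (mapRingHom ((Ideal.Quotient.mk _).comp (C : F →+* Polynomial F)))) (by
    intro a ha
    rw [Ideal.mem_span_singleton] at ha
    obtain ⟨c, rfl⟩ := ha
    rw [RingHom.comp_apply, map_mul, Ideal.Quotient.eq_zero_iff_mem]
    apply Ideal.mul_mem_right
    have h : (mapRingHom ((Ideal.Quotient.mk (Ideal.span ({X ^ 4} : Set (Polynomial F)))).comp
        (C : F →+* Polynomial F))) (X ^ n - 1 : Polynomial F)
        = (X ^ n - 1 : Polynomial (Rq F)) := by simp
    rw [h]
    exact Ideal.subset_span rfl)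

/-- The `i`-th torsion code `Tor_i(C) = {μ(g) : uⁱ·g ∈ C}`, as a subset of `Q`. -/
def TorSet (F : Type) [Field F] (n : ℕ) (i : ℕ) (Cc : Ideal (Sq F n)) : Set (Qq F n) :=
  { a | ∃ g : Sq F n, (uS F n) ^ i * g ∈ Cc ∧ muHom F n g = a }

/-- The code `C` has `i`-th torsional degree `t`, i.e. `Tor_i(C) = ⟨(x−1)^t⟩` with `0 ≤ t ≤ n`. -/
def HasTorDeg (F : Type) [Field F] (n : ℕ) (i : ℕ) (Cc : Ideal (Sq F n)) (t : ℕ) : Prop :=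
  t ≤ n ∧ TorSet F n i Cc = ↑(Ideal.span {(xQ F n - 1) ^ t})

/-- An element of `S` that is the lift of a unit of `Q = F[x]/⟨xⁿ−1⟩`. -/
def IsUnitLift (F : Type) [Field F] (n : ℕ) (a : Sq F n) : Prop :=
  ∃ q : Qq F n, IsUnit q ∧ a = liftQS F n q

/-- An element of `S` that is zero or the lift of a unit of `Q = F[x]/⟨xⁿ−1⟩`. -/
def UnitOrZeroLift (F : Type) [Field F] (n : ℕ) (a : Sq F n) : Prop :=
  a = 0 ∨ IsUnitLift F n a

/-! Since `(x - 1)^{p^k} = x^{p^k} - 1 = 0` in `S` and `u⁴ = 0`, multiplying `g₁` by `u²`, resp. by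
`u(x - 1)^{n - r₁}`, kills all but one of its three terms. Both products lie in `C`, so `Tor₃(C)` contains
`(x - 1)^{r₁}` and `(x - 1)^{n - r₁ + k₄}p₄`; when `p₄` is a unit, `(x - 1)^{t₃}` divides both powers of
`x - 1` in `F[x]/⟨xⁿ - 1⟩ = F[x]/⟨(x - 1)ⁿ⟩`, which forces `t₃` to be at most each exponent. -/

section CyclicCodes

variable {F : Type} [Field F]

lemma uS_pow_four (n : ℕ) : uS F n ^ 4 = 0 := by
  have h : uu F ^ 4 = 0 := by
    rw [uu, ← map_pow, Ideal.Quotient.eq_zero_iff_mem]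
    exact Ideal.subset_span rfl
  rw [uS, ← map_pow, ← C_pow, h, map_zero, map_zero]

lemma xS_pow_self (n : ℕ) : xS F n ^ n = 1 := by
  rw [← sub_eq_zero, xS, ← map_pow, ← map_one (Ideal.Quotient.mk _), ← map_sub,
    Ideal.Quotient.eq_zero_iff_mem]
  exact Ideal.subset_span rfl

lemma xS_sub_one_pow_char_pow (p k : ℕ) [Fact p.Prime] [CharP F p] :
    (xS F (p ^ k) - 1) ^ p ^ k = 0 := by
  have h := congrArg (aeval (xS F (p ^ k))) (sub_pow_char_pow (X : F[X]) 1 (p := p) (n := k))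
  simpa [xS_pow_self] using h

@[simp]
lemma muHom_xS (n : ℕ) : muHom F n (xS F n) = xQ F n := by
  simp [muHom, xS, xQ]

@[simp]
lemma muHom_liftQS (n : ℕ) (a : Qq F n) : muHom F n (liftQS F n a) = a := by
  obtain ⟨f, rfl⟩ := Ideal.Quotient.mk_surjective a
  have hres : (resHom F).comp ((Ideal.Quotient.mk _).comp C) = RingHom.id F := by
    ext a
    simp [resHom]
  simp only [liftQS, muHom, Ideal.Quotient.lift_mk, RingHom.comp_apply, coe_mapRingHom,
    Polynomial.map_map, hres, Polynomial.map_id]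

lemma isUnitLift_one (n : ℕ) : IsUnitLift F n 1 :=
  ⟨1, isUnit_one, (map_one _).symm⟩

lemma le_of_xQ_sub_one_pow_mem_span (p k : ℕ) [Fact p.Prime] [CharP F p] {r t : ℕ}
    (ht : t ≤ p ^ k) (h : (xQ F (p ^ k) - 1) ^ r ∈ Ideal.span {(xQ F (p ^ k) - 1) ^ t}) :
    t ≤ r := by
  have hmk (s : ℕ) : (xQ F (p ^ k) - 1) ^ s = Ideal.Quotient.mk _ ((X - 1) ^ s) := by
    simp [xQ]
  rw [hmk, hmk, ← Set.image_singleton (f := Ideal.Quotient.mk _), ← Ideal.map_span,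
    Ideal.mem_quotient_iff_mem_sup] at h
  have hle : Ideal.span {(X ^ p ^ k - 1 : F[X])} ≤ Ideal.span {(X - 1) ^ t} := by
    have hfrob : (X - 1 : F[X]) ^ p ^ k = X ^ p ^ k - 1 := by rw [sub_pow_char_pow, one_pow]
    rw [Ideal.span_singleton_le_span_singleton, ← hfrob]
    exact pow_dvd_pow _ ht
  rw [sup_eq_left.mpr hle, Ideal.mem_span_singleton, ← C_1] at h
  exact (pow_dvd_pow_iff (X_sub_C_ne_zero 1) (not_isUnit_X_sub_C 1)).mp h

lemma torDeg_le_of_mem (p k : ℕ) [Fact p.Prime] [CharP F p] {i r t : ℕ} {C : Ideal (Sq F (p ^ k))}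
    {a : Sq F (p ^ k)} (hC : HasTorDeg F (p ^ k) i C t) (ha : IsUnitLift F (p ^ k) a)
    (h : uS F (p ^ k) ^ i * (xS F (p ^ k) - 1) ^ r * a ∈ C) : t ≤ r := by
  obtain ⟨q, hq, rfl⟩ := ha
  have hTor : (xQ F (p ^ k) - 1) ^ r * q ∈ TorSet F (p ^ k) i C :=
    ⟨_, by rwa [← mul_assoc], by simp⟩
  rw [hC.2, SetLike.mem_coe, Ideal.mul_unit_mem_iff_mem _ hq] at hTor
  exact le_of_xQ_sub_one_pow_mem_span p k hC.1 hTor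

end CyclicCodes

theorem stmt_9_general (p m k : ℕ) (hp : Nat.Prime p)
    (F : Type) [Field F] [Fintype F] (hF : Fintype.card F = p ^ m)
    (r₁ k₄ k₅ : ℕ)
    (p₄ p₅ : Sq F (p ^ k))
    (g₁ : Sq F (p ^ k))
    (hg₁ : g₁ = uS F (p ^ k) * (xS F (p ^ k) - 1) ^ r₁
        + uS F (p ^ k) ^ 2 * (xS F (p ^ k) - 1) ^ k₄ * p₄
        + uS F (p ^ k) ^ 3 * (xS F (p ^ k) - 1) ^ k₅ * p₅)
    (C : Ideal (Sq F (p ^ k))) (hC : C = Ideal.span {g₁}) :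
    uS F (p ^ k) ^ 2 * g₁ = uS F (p ^ k) ^ 3 * (xS F (p ^ k) - 1) ^ r₁ ∧
    uS F (p ^ k) ^ 3 * (xS F (p ^ k) - 1) ^ r₁ ∈ C ∧
    uS F (p ^ k) * (xS F (p ^ k) - 1) ^ (p ^ k - r₁) * g₁
      = uS F (p ^ k) ^ 3 * (xS F (p ^ k) - 1) ^ (p ^ k - r₁ + k₄) * p₄ ∧
    uS F (p ^ k) ^ 3 * (xS F (p ^ k) - 1) ^ (p ^ k - r₁ + k₄) * p₄ ∈ C ∧
    (IsUnitLift F (p ^ k) p₄ →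
      ∀ t₃ : ℕ, HasTorDeg F (p ^ k) 3 C t₃ → t₃ ≤ min r₁ (p ^ k - r₁ + k₄)) := by
  have : Fact p.Prime := ⟨hp⟩
  have : CharP F p := charP_of_card_eq_prime_pow hF
  set u := uS F (p ^ k)
  set y := xS F (p ^ k) - 1
  have hu : u ^ 4 = 0 := uS_pow_four _
  have hy : y ^ (p ^ k - r₁) * y ^ r₁ = 0 := by
    rw [← pow_add]
    exact pow_eq_zero_of_le (by omega) (xS_sub_one_pow_char_pow p k)
  have e₁ : u ^ 2 * g₁ = u ^ 3 * y ^ r₁ := by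
    rw [hg₁]
    linear_combination (y ^ k₄ * p₄ + u * y ^ k₅ * p₅) * hu
  have e₂ : u * y ^ (p ^ k - r₁) * g₁ = u ^ 3 * y ^ (p ^ k - r₁ + k₄) * p₄ := by
    rw [hg₁, pow_add]
    linear_combination u ^ 2 * hy + y ^ (p ^ k - r₁) * y ^ k₅ * p₅ * hu
  have hg₁C : g₁ ∈ C := hC ▸ Ideal.mem_span_singleton_self g₁
  have m₁ : u ^ 3 * y ^ r₁ ∈ C := e₁ ▸ C.mul_mem_left _ hg₁C
  have m₂ : u ^ 3 * y ^ (p ^ k - r₁ + k₄) * p₄ ∈ C := e₂ ▸ C.mul_mem_left _ hg₁C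
  refine ⟨e₁, m₁, e₂, m₂, fun hp₄ t₃ ht₃ => le_min ?_ (torDeg_le_of_mem p k ht₃ hp₄ m₂)⟩
  exact torDeg_le_of_mem p k ht₃ (isUnitLift_one _) (by rwa [mul_one])

/-- `u²g₁ = u³(x−1)^{r₁} ∈ C` and
`u(x−1)^{n−r₁}g₁ = u³(x−1)^{n−r₁+k₄}p₄ ∈ C`; if moreover `p₄` is a unit then
`t₃ ≤ min{r₁, n − r₁ + k₄}`. -/
theorem stmt_9 (p m k : ℕ) (hp : Nat.Prime p) (hm : 1 ≤ m) (hk : 1 ≤ k)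
    (F : Type) [Field F] [Fintype F] (hF : Fintype.card F = p ^ m)
    (r₁ k₄ k₅ : ℕ) (hk₄ : k₄ < r₁) (hk₅ : k₅ < r₁) (hr₁ : r₁ < p ^ k)
    (p₄ p₅ : Sq F (p ^ k))
    (hp₄ : UnitOrZeroLift F (p ^ k) p₄) (hp₅ : UnitOrZeroLift F (p ^ k) p₅)
    (g₁ : Sq F (p ^ k))
    (hg₁ : g₁ = uS F (p ^ k) * (xS F (p ^ k) - 1) ^ r₁
        + uS F (p ^ k) ^ 2 * (xS F (p ^ k) - 1) ^ k₄ * p₄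
        + uS F (p ^ k) ^ 3 * (xS F (p ^ k) - 1) ^ k₅ * p₅)
    (C : Ideal (Sq F (p ^ k))) (hC : C = Ideal.span {g₁}) :
    uS F (p ^ k) ^ 2 * g₁ = uS F (p ^ k) ^ 3 * (xS F (p ^ k) - 1) ^ r₁ ∧
    uS F (p ^ k) ^ 3 * (xS F (p ^ k) - 1) ^ r₁ ∈ C ∧
    uS F (p ^ k) * (xS F (p ^ k) - 1) ^ (p ^ k - r₁) * g₁
      = uS F (p ^ k) ^ 3 * (xS F (p ^ k) - 1) ^ (p ^ k - r₁ + k₄) * p₄ ∧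
    uS F (p ^ k) ^ 3 * (xS F (p ^ k) - 1) ^ (p ^ k - r₁ + k₄) * p₄ ∈ C ∧
    (IsUnitLift F (p ^ k) p₄ →
      ∀ t₃ : ℕ, HasTorDeg F (p ^ k) 3 C t₃ → t₃ ≤ min r₁ (p ^ k - r₁ + k₄)) :=
  stmt_9_general p m k hp F hF r₁ k₄ k₅ p₄ p₅ g₁ hg₁ C hC
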